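/- arXiv:2108.08361 — 2 statements merged into one kernel-verified Lean document; each statement's English description precedes it below -/
import Mathlib

section
/- Let E ∈ C, d ≥ 2, and y_1,...,y_n ∈ R^d. Then the space of functions of the form Φ(x) = Σ_{finite} z_m exp(ζ_m·x), with ζ_m·ζ_m = -E, satisfying Φ(y_j) = 0 for all j = 1,...,n, is infinite-dimensional; each such Φ solves -ΔΦ = EΦ on R^d and vanishes at every point y_j. -/
/-
The functions `x ↦ exp (ζ · x)` with `ζ · ζ = -E` are characters of the additive group `ℝ^d`,
pairwise distinct, hence linearly independent by Dedekind's lemma; for `d ≥ 2` the complex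
quadric `ζ · ζ = -E` is infinite, so their span is infinite-dimensional. Each of them solves
`-Δφ = Eφ` because `Δ exp (ζ · x) = (ζ · ζ) exp (ζ · x)`. Vanishing at `y₁, …, yₙ` is the kernel
of a linear map into `ℂⁿ`, and the kernel of a map from an infinite-dimensional space into a
finite-dimensional one is still infinite-dimensional.
-/

open Complex

/-- The Laplacian of `f : ℝ^d → ℂ`, as the sum of the second partial derivatives
along the standard coordinate directions. -/
noncomputable def laplacian {d : ℕ} (f : EuclideanSpace ℝ (Fin d) → ℂ)
    (x : EuclideanSpace ℝ (Fin d)) : ℂ :=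
  ∑ i : Fin d,
    fderiv ℝ (fun z => fderiv ℝ f z (EuclideanSpace.single i (1 : ℝ))) x
      (EuclideanSpace.single i (1 : ℝ))

open Matrix

theorem Submodule.not_finite_inf_ker {R M N : Type*} [Ring R] [AddCommGroup M] [Module R M]
    [AddCommGroup N] [Module R N] [IsNoetherian R N] (f : M →ₗ[R] N) {V : Submodule R M}
    (hV : ¬ Module.Finite R V) : ¬ Module.Finite R ↥(V ⊓ LinearMap.ker f) := by
  simp only [Module.Finite.iff_fg] at hV ⊢
  exact fun hker => hV (Submodule.fg_of_fg_map_of_fg_inf_ker f (IsNoetherian.noetherian _) hker)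

namespace HelmholtzExp

section

variable {ι : Type*} [Fintype ι]

noncomputable def complexPairing (ζ : ι → ℂ) : EuclideanSpace ℝ ι →L[ℝ] ℂ :=
  ∑ i, ζ i • (ofRealCLM.comp (EuclideanSpace.proj i))

theorem complexPairing_apply (ζ : ι → ℂ) (x : EuclideanSpace ℝ ι) :
    complexPairing ζ x = ∑ i, ζ i * (x i : ℂ) := by
  simp [complexPairing]

theorem complexPairing_single [DecidableEq ι] (ζ : ι → ℂ) (i : ι) :
    complexPairing ζ (EuclideanSpace.single i 1) = ζ i := by
  simp [complexPairing_apply, apply_ite]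

noncomputable def planeWave (ζ : ι → ℂ) (x : EuclideanSpace ℝ ι) : ℂ :=
  cexp (∑ i, ζ i * (x i : ℂ))

theorem planeWave_eq_cexp_comp (ζ : ι → ℂ) : planeWave ζ = cexp ∘ complexPairing ζ := by
  ext x
  simp [planeWave, complexPairing_apply]

theorem hasFDerivAt_planeWave (ζ : ι → ℂ) (x : EuclideanSpace ℝ ι) :
    HasFDerivAt (planeWave ζ) (planeWave ζ x • complexPairing ζ) x := by
  rw [planeWave_eq_cexp_comp]
  exact (complexPairing ζ).hasFDerivAt.cexp

theorem planeWave_injective : Function.Injective (planeWave : (ι → ℂ) → _) := by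
  classical
  intro ζ ζ' h
  have hderiv := (hasFDerivAt_planeWave ζ 0).unique (h ▸ hasFDerivAt_planeWave ζ' 0)
  ext i
  simpa [planeWave, complexPairing_single] using
    congrArg (fun L => L (EuclideanSpace.single i 1)) hderiv

noncomputable def planeWaveHom (ζ : ι → ℂ) : Multiplicative (EuclideanSpace ℝ ι) →* ℂ where
  toFun x := planeWave ζ x.toAdd
  map_one' := by simp [planeWave]
  map_mul' x y := by
    simp only [planeWave_eq_cexp_comp, Function.comp_apply, toAdd_mul, map_add, Complex.exp_add]

theorem linearIndependent_planeWave : LinearIndependent ℂ (planeWave : (ι → ℂ) → _) :=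
  (linearIndependent_monoidHom _ ℂ).comp planeWaveHom fun _ _ h =>
    planeWave_injective (congrArg DFunLike.coe h)

noncomputable def expSum (s : Finset (ι → ℂ)) (c : (ι → ℂ) → ℂ) (x : EuclideanSpace ℝ ι) : ℂ :=
  ∑ ζ ∈ s, c ζ * planeWave ζ x

theorem fderiv_expSum_single [DecidableEq ι] (s : Finset (ι → ℂ)) (c : (ι → ℂ) → ℂ)
    (x : EuclideanSpace ℝ ι) (i : ι) :
    fderiv ℝ (expSum s c) x (EuclideanSpace.single i 1) = expSum s (fun ζ => ζ i * c ζ) x := by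
  have hsum : HasFDerivAt (expSum s c) (∑ ζ ∈ s, c ζ • planeWave ζ x • complexPairing ζ) x :=
    HasFDerivAt.fun_sum fun ζ _ => (hasFDerivAt_planeWave ζ x).const_mul (c ζ)
  simp only [hsum.fderiv, FunLike.coe_sum, Finset.sum_apply,
    FunLike.coe_smul, Pi.smul_apply, complexPairing_single, smul_eq_mul, expSum]
  exact Finset.sum_congr rfl fun ζ _ => by ring

def helmholtzSet (ι : Type*) [Fintype ι] (E : ℂ) : Set (ι → ℂ) := {ζ | ζ ⬝ᵥ ζ = -E}

theorem helmholtzSet_infinite [Nontrivial ι] (E : ℂ) : (helmholtzSet ι E).Infinite := by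
  classical
  obtain ⟨i, j, hij⟩ := exists_pair_ne ι
  -- `ζ i + I ζ j = t` and `ζ i - I ζ j = -E / t`, so `ζ ⬝ᵥ ζ` is their product `-E`
  let ζ : ℂ → ι → ℂ := fun t =>
    Pi.single i ((t - E / t) / 2) + Pi.single j (-(I * (t + E / t)) / 2)
  have recover (t : ℂ) : ζ t i + I * ζ t j = t := by
    simp only [ζ, Pi.add_apply, Pi.single_eq_same, Pi.single_eq_of_ne hij,
      Pi.single_eq_of_ne hij.symm]
    linear_combination (-(t + E / t) / 2) * I_sq
  have hζ_inj : Function.Injective ζ := fun t t' h => by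
    rw [← recover t, ← recover t', h]
  refine Set.infinite_of_injOn_mapsTo hζ_inj.injOn (s := {0}ᶜ) (fun t (ht : t ≠ 0) => ?_)
    (Set.finite_singleton 0).infinite_compl
  simp only [helmholtzSet, Set.mem_ofPred_eq, ζ, dotProduct_add,
    dotProduct_single, Pi.add_apply, Pi.single_eq_same, Pi.single_eq_of_ne hij,
    Pi.single_eq_of_ne hij.symm]
  field_simp
  linear_combination (t ^ 2 + E) ^ 2 * I_sq

def helmholtzSpan (ι : Type*) [Fintype ι] (E : ℂ) : Submodule ℂ (EuclideanSpace ℝ ι → ℂ) :=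
  Submodule.span ℂ (planeWave '' helmholtzSet ι E)

theorem mem_helmholtzSpan_iff {E : ℂ} {Φ : EuclideanSpace ℝ ι → ℂ} :
    Φ ∈ helmholtzSpan ι E ↔
      ∃ (s : Finset (ι → ℂ)) (c : (ι → ℂ) → ℂ), (∀ ζ ∈ s, ζ ∈ helmholtzSet ι E) ∧
        Φ = expSum s c := by
  constructor
  · intro hΦ
    obtain ⟨l, hl, rfl⟩ := (Finsupp.mem_span_image_iff_linearCombination ℂ).mp hΦ
    refine ⟨l.support, l, fun ζ hζ => hl hζ, ?_⟩
    ext x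
    simp [Finsupp.linearCombination_apply, Finsupp.sum, expSum]
  · rintro ⟨s, c, hs, rfl⟩
    have hsum : expSum s c = ∑ ζ ∈ s, c ζ • planeWave ζ := by
      ext x
      simp [expSum]
    rw [hsum]
    exact Submodule.sum_mem _ fun ζ hζ =>
      Submodule.smul_mem _ _ (Submodule.subset_span ⟨ζ, hs ζ hζ, rfl⟩)

theorem helmholtzSpan_not_finite [Nontrivial ι] (E : ℂ) :
    ¬ Module.Finite ℂ (helmholtzSpan ι E) := by
  intro hfin
  let v : helmholtzSet ι E → helmholtzSpan ι E := fun ζ =>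
    ⟨planeWave ζ, Submodule.subset_span (Set.mem_image_of_mem _ ζ.2)⟩
  have hv : LinearIndependent ℂ v := LinearIndependent.of_comp (helmholtzSpan ι E).subtype
    (linearIndependent_planeWave.comp _ Subtype.val_injective)
  have := (helmholtzSet_infinite (ι := ι) E).to_subtype
  exact Module.Finite.not_linearIndependent_of_infinite v hv

end

theorem laplacian_expSum {d : ℕ} (s : Finset (Fin d → ℂ)) (c : (Fin d → ℂ) → ℂ)
    (x : EuclideanSpace ℝ (Fin d)) :
    laplacian (expSum s c) x = expSum s (fun ζ => (ζ ⬝ᵥ ζ) * c ζ) x := by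
  simp only [laplacian, fderiv_expSum_single]
  simp only [expSum, dotProduct, Finset.sum_mul]
  rw [Finset.sum_comm]
  exact Finset.sum_congr rfl fun ζ _ => Finset.sum_congr rfl fun i _ => by ring

theorem neg_laplacian_expSum {d : ℕ} {E : ℂ} {s : Finset (Fin d → ℂ)}
    (hs : ∀ ζ ∈ s, ζ ∈ helmholtzSet (Fin d) E) (c : (Fin d → ℂ) → ℂ)
    (x : EuclideanSpace ℝ (Fin d)) :
    -laplacian (expSum s c) x = E * expSum s c x := by
  rw [laplacian_expSum, expSum, expSum, Finset.mul_sum, ← Finset.sum_neg_distrib]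
  refine Finset.sum_congr rfl fun ζ hζ => ?_
  rw [show ζ ⬝ᵥ ζ = -E from hs ζ hζ]
  ring

end HelmholtzExp

open HelmholtzExp in
/-- For every `E ∈ ℂ`, `d ≥ 2` and points `y 1, …, y n ∈ ℝ^d`, the space of finite
linear combinations of exponentials `exp(ζ·x)` with `ζ·ζ = -E` vanishing at every
`y j` is infinite-dimensional, and each of its members solves `-ΔΦ = EΦ`. -/
theorem exp_helmholtz_solutions_vanishing_infinite_dimensional
    (d : ℕ) (hd : 2 ≤ d) (E : ℂ) (n : ℕ) (y : Fin n → EuclideanSpace ℝ (Fin d)) :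
    ∃ U : Submodule ℂ (EuclideanSpace ℝ (Fin d) → ℂ),
      (∀ Φ : EuclideanSpace ℝ (Fin d) → ℂ, Φ ∈ U ↔
        (∃ (s : Finset (Fin d → ℂ)) (z : (Fin d → ℂ) → ℂ),
          (∀ ζ ∈ s, ∑ i, ζ i * ζ i = -E) ∧
          Φ = fun x => ∑ ζ ∈ s, z ζ * Complex.exp (∑ i, ζ i * (x i : ℂ))) ∧
        ∀ j : Fin n, Φ (y j) = 0) ∧
      ¬ Module.Finite ℂ ↥U ∧
      ∀ Φ ∈ U, (∀ x, -(laplacian Φ x) = E * Φ x) ∧ ∀ j : Fin n, Φ (y j) = 0 := by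
  have : Nontrivial (Fin d) := Fin.nontrivial_iff_two_le.mpr hd
  refine ⟨helmholtzSpan (Fin d) E ⊓ LinearMap.ker (LinearMap.funLeft ℂ ℂ y), fun Φ => ?_,
    Submodule.not_finite_inf_ker _ (helmholtzSpan_not_finite E), ?_⟩
  · simp only [Submodule.mem_inf, mem_helmholtzSpan_iff, LinearMap.mem_ker, funext_iff,
      LinearMap.funLeft_apply, Pi.zero_apply]
    rfl
  · rintro Φ ⟨hΦ, hvanish⟩
    obtain ⟨s, c, hs, rfl⟩ := mem_helmholtzSpan_iff.mp hΦ
    exact ⟨neg_laplacian_expSum hs c, congrFun (LinearMap.mem_ker.mp hvanish)⟩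
end

section
/- Let d ≥ 2, r > 0, and let y, y' be distinct points in R^d. Then the functions θ ↦ exp(i r θ·y) and θ ↦ exp(i r θ·y') on the unit sphere S^{d-1} are linearly independent in L^2(S^{d-1}). More generally, for pairwise distinct y_1,...,y_n ∈ R^d, the functions θ ↦ exp(i r θ·y_j), j=1,...,n, are linearly independent in L^2(S^{d-1}). -/
/-!
Pick a unit vector `f` separating the points (the numbers `⟪f, y j⟫` are pairwise distinct) and a
unit vector `e ⟂ f`. On the great circle `cos t • e + sin t • f` the relation becomes
`∑ z j * exp (I * (a j * cos t + b j * sin t)) = 0` with `b` injective. The left side is entire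
in `t`, so it also vanishes at `t = s * I`, where the `j`-th exponential has modulus
`exp (-(b j * sinh s))`. As `s → ∞` the term with the least `b j` among the nonzero `z j` dominates
all the others, so that coefficient must vanish after all.
-/

open MeasureTheory Complex Filter Asymptotics Function Metric Topology
open scoped RealInnerProductSpace

theorem eq_zero_of_sum_mul_eq_zero_of_isLittleO {α ι 𝕜 : Type*} [NormedField 𝕜] [Fintype ι]
    {l : Filter α} {f : ι → α → 𝕜} {z : ι → 𝕜} {j₀ : ι}
    (hsum : ∀ᶠ s in l, ∑ j, z j * f j s = 0) (hf : ∃ᶠ s in l, f j₀ s ≠ 0)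
    (ho : ∀ j ≠ j₀, z j ≠ 0 → f j =o[l] f j₀) : z j₀ = 0 := by
  classical
  by_contra hz
  have hrest : (fun s : α => ∑ j ∈ Finset.univ.erase j₀, z j * f j s) =o[l] f j₀ := by
    refine IsLittleO.fun_sum fun j hj => ?_
    by_cases hzj : z j = 0
    · simp only [hzj, zero_mul]
      exact isLittleO_zero _ _
    · exact (ho j (Finset.ne_of_mem_erase hj) hzj).const_mul_left (z j)
  have hlead : (fun s => z j₀ * f j₀ s) =o[l] f j₀ := by
    refine hrest.neg_left.congr' ?_ EventuallyEq.rfl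
    filter_upwards [hsum] with s hs
    rw [← Finset.add_sum_erase _ _ (Finset.mem_univ j₀)] at hs
    exact (eq_neg_of_add_eq_zero_left hs).symm
  exact isLittleO_irrefl hf ((isLittleO_const_mul_left_iff hz).1 hlead)

theorem Differentiable.eq_zero_of_forall_ofReal {F : Type*} [NormedAddCommGroup F]
    [NormedSpace ℂ F] [CompleteSpace F] {g : ℂ → F} (hg : Differentiable ℂ g)
    (h : ∀ t : ℝ, g t = 0) : g = 0 := by
  have hfreq : ∃ᶠ w in 𝓝[≠] (0 : ℂ), g w = 0 :=
    ((continuous_ofReal.continuousWithinAt (s := {0}ᶜ) (x := 0)).tendsto_nhdsWithin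
      (fun t ht => by simpa using ht)).frequently (Frequently.of_forall h)
  have hanalytic : AnalyticOnNhd ℂ g Set.univ := hg.differentiableOn.analyticOnNhd isOpen_univ
  funext w
  exact hanalytic.eqOn_zero_of_preconnected_of_frequently_eq_zero isPreconnected_univ
    (Set.mem_univ 0) hfreq (Set.mem_univ w)

theorem norm_exp_I_mul_cos_sin_mul_I (a b s : ℝ) :
    ‖cexp (I * (a * cos (s * I) + b * sin (s * I)))‖ = Real.exp (-(b * Real.sinh s)) := by
  rw [cos_mul_I, sin_mul_I, norm_exp]
  congr 1
  simp [sinh_ofReal_re, sinh_ofReal_im, cosh_ofReal_im]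

theorem Real.tendsto_sinh_atTop : Tendsto Real.sinh atTop atTop :=
  tendsto_atTop_mono' atTop ((eventually_ge_atTop 0).mono fun _ hs => Real.self_le_sinh_iff.2 hs)
    tendsto_id

theorem eq_zero_of_sum_exp_cos_sin_eq_zero {ι : Type*} [Fintype ι] {a b : ι → ℝ}
    (hb : Injective b) {z : ι → ℂ}
    (h : ∀ t : ℝ, ∑ j, z j * cexp (I * (a j * cos t + b j * sin t)) = 0) : z = 0 := by
  set F : ι → ℂ → ℂ := fun j φ => cexp (I * (a j * cos φ + b j * sin φ))
  have hentire : (fun φ => ∑ j, z j * F j φ) = 0 :=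
    Differentiable.eq_zero_of_forall_ofReal (by fun_prop) h
  by_contra hz
  obtain ⟨j₀, hj₀, hmin⟩ := (Finset.univ.filter (z · ≠ 0)).exists_min_image b
    (by simpa [Finset.filter_nonempty_iff, funext_iff] using hz)
  refine (Finset.mem_filter.1 hj₀).2 (eq_zero_of_sum_mul_eq_zero_of_isLittleO
    (f := fun j (s : ℝ) => F j (s * I)) (l := atTop)
    (Eventually.of_forall fun s => congrFun hentire _)
    (Frequently.of_forall fun s => exp_ne_zero _)
    fun j hj hzj => ?_)
  have hlt : b j₀ < b j := lt_of_le_of_ne (hmin j (by simpa using hzj)) (hb.ne hj.symm)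
  rw [← isLittleO_norm_norm]
  simp only [F, norm_exp_I_mul_cos_sin_mul_I]
  refine Real.isLittleO_exp_comp_exp_comp.2 ?_
  exact (Real.tendsto_sinh_atTop.const_mul_atTop (sub_pos.2 hlt)).congr fun s => by ring

section InnerProductSpace

variable {E : Type*} [NormedAddCommGroup E] [InnerProductSpace ℝ E]

theorem exists_forall_inner_ne_zero {κ : Type*} [Finite κ] {v : κ → E} (hv : ∀ k, v k ≠ 0) :
    ∃ f : E, ∀ k, ⟪v k, f⟫ ≠ 0 := by
  have hproper : ∀ k, LinearMap.ker (innerₛₗ ℝ (v k)) ≠ ⊤ := fun k htop =>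
    hv k (inner_self_eq_zero.1 (LinearMap.mem_ker.1 (htop ▸ Submodule.mem_top)))
  obtain ⟨f, hf⟩ := Set.ne_univ_iff_exists_notMem _ |>.1 fun hcover =>
    (Subspace.exists_eq_top_of_iUnion_eq_univ hcover).elim hproper
  simp only [Set.mem_iUnion, SetLike.mem_coe, LinearMap.mem_ker, innerₛₗ_apply_apply,
    not_exists] at hf
  exact ⟨f, hf⟩

theorem exists_norm_eq_one_inner_injective [Nontrivial E] {ι : Type*} [Finite ι] {y : ι → E}
    (hy : Injective y) : ∃ f : E, ‖f‖ = 1 ∧ Injective (fun j => ⟪f, y j⟫) := by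
  obtain ⟨w, hw⟩ := exists_ne (0 : E)
  -- the extra vector `w` is only there to force `f ≠ 0`
  obtain ⟨f, hf⟩ := exists_forall_inner_ne_zero
    (v := fun k : Option {p : ι × ι // p.1 ≠ p.2} => k.elim w fun p => y p.1.1 - y p.1.2)
    (by rintro (_ | ⟨⟨i, j⟩, hij⟩); exacts [hw, sub_ne_zero.2 (hy.ne hij)])
  have hf0 : f ≠ 0 := by rintro rfl; exact hf none (inner_zero_right _)
  refine ⟨(‖f‖⁻¹ : ℝ) • f, norm_smul_inv_norm hf0, fun i j hij => by_contra fun hne => ?_⟩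
  refine hf (some ⟨(i, j), hne⟩) ?_
  simp only [real_inner_smul_left, mul_eq_mul_left_iff, inv_eq_zero, norm_eq_zero, hf0,
    or_false] at hij
  simp [inner_sub_left, real_inner_comm, hij]

theorem exists_norm_eq_one_inner_eq_zero [FiniteDimensional ℝ E] (hE : 2 ≤ Module.finrank ℝ E)
    (f : E) : ∃ e : E, ‖e‖ = 1 ∧ ⟪e, f⟫ = 0 := by
  have hK : (ℝ ∙ f)ᗮ ≠ ⊥ := by
    rw [← Submodule.one_le_finrank_iff]
    have hsum := (ℝ ∙ f).finrank_add_finrank_orthogonal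
    have hspan : Module.finrank ℝ (ℝ ∙ f) ≤ 1 := by
      simpa using finrank_span_le_card ({f} : Set E)
    omega
  obtain ⟨e, he, he0⟩ := Submodule.exists_mem_ne_zero_of_ne_bot hK
  refine ⟨(‖e‖⁻¹ : ℝ) • e, norm_smul_inv_norm he0, ?_⟩
  rw [real_inner_smul_left, Submodule.mem_orthogonal_singleton_iff_inner_left.1 he, mul_zero]

theorem norm_cos_smul_add_sin_smul {e f : E} (he : ‖e‖ = 1) (hf : ‖f‖ = 1) (hef : ⟪e, f⟫ = 0)
    (t : ℝ) : ‖Real.cos t • e + Real.sin t • f‖ = 1 := by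
  refine (pow_eq_one_iff_of_nonneg (norm_nonneg _) two_ne_zero).1 ?_
  rw [norm_add_sq_real, norm_smul, norm_smul, real_inner_smul_left, real_inner_smul_right, hef,
    he, hf]
  simp only [Real.norm_eq_abs, mul_pow, sq_abs]
  linear_combination Real.cos_sq_add_sin_sq t

theorem eq_zero_of_forall_sphere_sum_exp_inner_eq_zero [FiniteDimensional ℝ E]
    (hE : 2 ≤ Module.finrank ℝ E) {ι : Type*} [Fintype ι] {y : ι → E} (hy : Injective y)
    {z : ι → ℂ} (h : ∀ x ∈ sphere (0 : E) 1, ∑ j, z j * cexp (I * (⟪x, y j⟫ : ℂ)) = 0) :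
    z = 0 := by
  have : Nontrivial E := Module.nontrivial_of_finrank_pos (R := ℝ) (by omega)
  obtain ⟨f, hf, hinj⟩ := exists_norm_eq_one_inner_injective hy
  obtain ⟨e, he, hef⟩ := exists_norm_eq_one_inner_eq_zero hE f
  refine eq_zero_of_sum_exp_cos_sin_eq_zero (a := fun j => ⟪e, y j⟫) hinj fun t => ?_
  have := h _ (mem_sphere_zero_iff_norm.2 (norm_cos_smul_add_sin_smul he hf hef t))
  simpa [inner_add_left, real_inner_smul_left, ← ofReal_cos, ← ofReal_sin, mul_comm] using this

theorem eq_zero_of_ae_toSphere_sum_exp_inner_eq_zero [FiniteDimensional ℝ E]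
    [MeasurableSpace E] [BorelSpace E] (hE : 2 ≤ Module.finrank ℝ E) (μ : Measure E)
    [μ.IsOpenPosMeasure] {ι : Type*} [Fintype ι] {y : ι → E} (hy : Injective y) {r : ℝ}
    (hr : r ≠ 0) {z : ι → ℂ}
    (h : ∀ᵐ θ : sphere (0 : E) 1 ∂μ.toSphere, ∑ j, z j * cexp (I * r * (⟪(θ : E), y j⟫ : ℂ)) = 0) :
    z = 0 := by
  have hzero := Measure.eq_of_ae_eq h (by fun_prop) continuous_const
  refine eq_zero_of_forall_sphere_sum_exp_inner_eq_zero hE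
    ((smul_right_injective E hr).comp hy) fun x hx => ?_
  simpa [inner_smul_right, mul_assoc] using congrFun hzero ⟨x, hx⟩

end InnerProductSpace

/-- For `d ≥ 2`, `r > 0` and pairwise distinct `y 1, …, y n ∈ ℝ^d`, the functions
`θ ↦ exp(i r θ·y j)` are linearly independent in `L²(S^{d-1})`: a linear combination
vanishing almost everywhere on the sphere has zero coefficients. In particular
(case `n = 2`) two such functions associated to distinct points are linearly
independent. -/
theorem sphere_exponentials_linear_independent
    (d : ℕ) (hd : 2 ≤ d) (r : ℝ) (hr : 0 < r) :
    (∀ y y' : EuclideanSpace ℝ (Fin d), y ≠ y' →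
      ∀ a b : ℂ,
        (∀ᵐ θ : Metric.sphere (0 : EuclideanSpace ℝ (Fin d)) 1
            ∂((volume : Measure (EuclideanSpace ℝ (Fin d))).toSphere),
          a * Complex.exp (Complex.I * r * (inner ℝ (θ : EuclideanSpace ℝ (Fin d)) y : ℝ)) +
          b * Complex.exp (Complex.I * r * (inner ℝ (θ : EuclideanSpace ℝ (Fin d)) y' : ℝ)) = 0) →
        a = 0 ∧ b = 0) ∧
    ∀ (n : ℕ) (y : Fin n → EuclideanSpace ℝ (Fin d)), Function.Injective y →
      ∀ z : Fin n → ℂ,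
        (∀ᵐ θ : Metric.sphere (0 : EuclideanSpace ℝ (Fin d)) 1
            ∂((volume : Measure (EuclideanSpace ℝ (Fin d))).toSphere),
          ∑ j, z j *
            Complex.exp (Complex.I * r * (inner ℝ (θ : EuclideanSpace ℝ (Fin d)) (y j) : ℝ)) = 0) →
        z = 0 := by
  have hE : 2 ≤ Module.finrank ℝ (EuclideanSpace ℝ (Fin d)) := by
    rwa [finrank_euclideanSpace_fin]
  refine ⟨fun y y' hne a b h => ?_, fun n y hy z h =>
    eq_zero_of_ae_toSphere_sum_exp_inner_eq_zero hE volume hy hr.ne' h⟩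
  have hz := eq_zero_of_ae_toSphere_sum_exp_inner_eq_zero hE volume
    (injective_pair_iff_ne.2 hne) hr.ne' (z := ![a, b]) (by simpa using h)
  exact ⟨congrFun hz 0, congrFun hz 1⟩
end
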